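/- arXiv:1108.2228 — 4 statements merged into one kernel-verified Lean document; each statement's English description precedes it below -/
import Mathlib

section
/- Let Q ∈ [0,1]^{n×n} be a fixed matrix and let A ∈ {0,1}^{n×n} be a random matrix whose entries are independent with A_{uv} Bernoulli(Q_{uv}). Then for each pair u ≠ v, the probability that (AAᵀ_{uv} − QQᵀ_{uv})² ≥ 2(n−2)log n + 2n + 4 is at most 2n^{−4}. -/
/-!
Write `(AAᵀ)ᵤᵥ - (QQᵀ)ᵤᵥ = ∑_w (A_{uw} A_{vw} - Q_{uw} Q_{vw})`. Since `u ≠ v`, the `w`-th summand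
depends only on the block of entries `{(u, w), (v, w)}`, and these blocks are disjoint, so the
summands are independent; they are centred because `A_{uw}` and `A_{vw}` are independent, and they
range in an interval of length `1`. Hoeffding's lemma makes each summand `1/4`-sub-Gaussian, hence
the sum `S` is `n/4`-sub-Gaussian and `P(|S| ≥ s) ≤ 2 exp (-2 s² / n)`. Since `log n ≤ n / 2`, the
threshold `s² = 2(n-2) log n + 2n + 4` is at least `2 n log n`, and the bound is at most `2 n⁻⁴`.
-/

open MeasureTheory ProbabilityTheory Matrix

namespace ProbabilityTheory

variable {Ω : Type*} [MeasurableSpace Ω] {μ : Measure Ω}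

lemma iIndepFun.curry {ι κ 𝓧 : Type*} [MeasurableSpace 𝓧] {X : ι × κ → Ω → 𝓧}
    (mX : ∀ p, Measurable (X p)) (h : iIndepFun X μ) :
    iIndepFun (fun i ω j ↦ X (i, j) ω) μ := by
  have := h.isProbabilityMeasure
  have (p : ι × κ) : IsProbabilityMeasure (μ.map (X p)) :=
    Measure.isProbabilityMeasure_map (mX p).aemeasurable
  have hrow : ∀ i, iIndepFun (fun j ↦ X (i, j)) μ :=
    fun i ↦ h.precomp (Prod.mk_right_injective i)
  rw [iIndepFun_iff_map_fun_eq_infinitePi_map (fun i ↦ measurable_pi_lambda _ fun j ↦ mX _)]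
  have hcomp : (fun ω i j ↦ X (i, j) ω) = MeasurableEquiv.curry ι κ 𝓧 ∘ fun ω p ↦ X p ω := rfl
  rw [hcomp, ← Measure.map_map (by fun_prop) (measurable_pi_lambda _ mX),
    h.map_fun_eq_infinitePi_map mX,
    Measure.infinitePi_map_curry (fun i j ↦ μ.map (X (i, j)))]
  congr 1
  ext1 i
  exact ((hrow i).map_fun_eq_infinitePi_map fun j ↦ mX _).symm

lemma integral_eq_of_zero_or_one {Y : Ω → ℝ} (hY : Measurable Y)
    (h01 : ∀ ω, Y ω = 0 ∨ Y ω = 1) {p : ℝ} (hp : 0 ≤ p)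
    (hY1 : μ {ω | Y ω = 1} = ENNReal.ofReal p) : μ[Y] = p := by
  have hE : MeasurableSet {ω | Y ω = 1} := hY (measurableSet_singleton 1)
  have hind : Y = {ω | Y ω = 1}.indicator 1 := by
    funext ω
    rcases h01 ω with h | h <;> simp [h]
  rw [hind, integral_indicator_one hE, measureReal_def, hY1, ENNReal.toReal_ofReal hp]

lemma HasSubgaussianMGF.measureReal_abs_ge_le {X : Ω → ℝ} {c : NNReal}
    (h : HasSubgaussianMGF X c μ) {ε : ℝ} (hε : 0 ≤ ε) :
    μ.real {ω | ε ≤ |X ω|} ≤ 2 * Real.exp (-ε ^ 2 / (2 * c)) := by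
  have hsplit : {ω | ε ≤ |X ω|} = {ω | ε ≤ X ω} ∪ {ω | ε ≤ (-X) ω} := by
    ext ω; simp [le_abs', le_neg, or_comm]
  calc μ.real {ω | ε ≤ |X ω|}
      ≤ μ.real {ω | ε ≤ X ω} + μ.real {ω | ε ≤ (-X) ω} := hsplit ▸ measureReal_union_le _ _
    _ ≤ Real.exp (-ε ^ 2 / (2 * c)) + Real.exp (-ε ^ 2 / (2 * c)) :=
        add_le_add (h.measure_ge_le hε) (h.neg.measure_ge_le hε)
    _ = 2 * Real.exp (-ε ^ 2 / (2 * c)) := by ring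

end ProbabilityTheory

namespace Matrix

variable {ι κ Ω : Type*} [MeasurableSpace Ω] {μ : Measure Ω}
  {A : Ω → Matrix ι κ ℝ} {Q : Matrix ι κ ℝ}

lemma iIndepFun_entry_mul_entry (hmeas : ∀ u w, Measurable (fun ω ↦ A ω u w))
    (hind : iIndepFun (fun (p : ι × κ) ω ↦ A ω p.1 p.2) μ) {u v : ι} (huv : u ≠ v) :
    iIndepFun (fun w ω ↦ A ω u w * A ω v w) μ := by
  let g : κ × Fin 2 → ι × κ := fun p ↦ (![u, v] p.2, p.1)
  have hg : g.Injective := by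
    rintro ⟨w, i⟩ ⟨w', j⟩ h
    simp only [g, Prod.mk.injEq] at h
    obtain ⟨hij, rfl⟩ := h
    fin_cases i <;> fin_cases j <;> simp_all [eq_comm]
  exact ((hind.precomp hg).curry fun p ↦ hmeas _ _).comp
    (fun _ f ↦ f 0 * f 1) fun _ ↦ by fun_prop

lemma integral_entry_mul_entry (hmeas : ∀ u w, Measurable (fun ω ↦ A ω u w))
    (h01 : ∀ ω u w, A ω u w = 0 ∨ A ω u w = 1)
    (hber : ∀ u w, μ {ω | A ω u w = 1} = ENNReal.ofReal (Q u w)) (hQ : ∀ u w, 0 ≤ Q u w)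
    (hind : iIndepFun (fun (p : ι × κ) ω ↦ A ω p.1 p.2) μ) {u v : ι} (huv : u ≠ v) (w : κ) :
    μ[fun ω ↦ A ω u w * A ω v w] = Q u w * Q v w := by
  have hmean (u : ι) : μ[fun ω ↦ A ω u w] = Q u w :=
    integral_eq_of_zero_or_one (hmeas u w) (fun ω ↦ h01 ω u w) (hQ u w) (hber u w)
  rw [(hind.indepFun (i := (u, w)) (j := (v, w)) (by simp [huv])).integral_fun_mul_eq_mul_integral
    (hmeas u w).aestronglyMeasurable (hmeas v w).aestronglyMeasurable, hmean, hmean]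

variable [IsProbabilityMeasure μ]

lemma hasSubgaussianMGF_entry_mul_entry_sub (hmeas : ∀ u w, Measurable (fun ω ↦ A ω u w))
    (h01 : ∀ ω u w, A ω u w = 0 ∨ A ω u w = 1)
    (hber : ∀ u w, μ {ω | A ω u w = 1} = ENNReal.ofReal (Q u w)) (hQ : ∀ u w, 0 ≤ Q u w)
    (hind : iIndepFun (fun (p : ι × κ) ω ↦ A ω p.1 p.2) μ) {u v : ι} (huv : u ≠ v) (w : κ) :
    HasSubgaussianMGF (fun ω ↦ A ω u w * A ω v w - Q u w * Q v w) (1 / 4) μ := by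
  have hIcc : ∀ᵐ ω ∂μ, A ω u w * A ω v w ∈ Set.Icc (0 : ℝ) 1 := ae_of_all _ fun ω ↦ by
    rcases h01 ω u w with h | h <;> rcases h01 ω v w with h' | h' <;> simp [h, h']
  have h := hasSubgaussianMGF_of_mem_Icc (X := fun ω ↦ A ω u w * A ω v w)
    ((hmeas u w).mul (hmeas v w)).aemeasurable hIcc
  rw [integral_entry_mul_entry hmeas h01 hber hQ hind huv w] at h
  convert h using 1
  norm_num

lemma hasSubgaussianMGF_mul_transpose_sub [Fintype κ]
    (hmeas : ∀ u w, Measurable (fun ω ↦ A ω u w))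
    (h01 : ∀ ω u w, A ω u w = 0 ∨ A ω u w = 1)
    (hber : ∀ u w, μ {ω | A ω u w = 1} = ENNReal.ofReal (Q u w)) (hQ : ∀ u w, 0 ≤ Q u w)
    (hind : iIndepFun (fun (p : ι × κ) ω ↦ A ω p.1 p.2) μ) {u v : ι} (huv : u ≠ v) :
    HasSubgaussianMGF (fun ω ↦ (A ω * (A ω)ᵀ) u v - (Q * Qᵀ) u v) (Fintype.card κ / 4) μ := by
  have hcentered := (iIndepFun_entry_mul_entry hmeas hind huv).comp
    (fun w x ↦ x - Q u w * Q v w) fun _ ↦ by fun_prop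
  have h := HasSubgaussianMGF.sum_of_iIndepFun hcentered (s := Finset.univ)
    fun w _ ↦ hasSubgaussianMGF_entry_mul_entry_sub hmeas h01 hber hQ hind huv w
  convert h using 1
  · ext ω
    simp [mul_apply, Finset.sum_sub_distrib]
  · simp [div_eq_mul_inv]

end Matrix

lemma Real.log_le_div_two {x : ℝ} (hx : 0 < x) : Real.log x ≤ x / 2 := by
  have h := Real.log_le_sub_one_of_pos (half_pos hx)
  rw [Real.log_div hx.ne' two_ne_zero] at h
  linarith [Real.log_two_lt_d9]

lemma Real.exp_neg_two_mul_div_le_inv_pow_four {n t : ℝ} (hn : 0 < n)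
    (ht : 2 * n * Real.log n ≤ t) : Real.exp (-(2 * t / n)) ≤ (n ^ 4)⁻¹ := by
  have h4 : (n ^ 4)⁻¹ = Real.exp (-(4 * Real.log n)) := by
    rw [Real.exp_neg, show 4 * Real.log n = Real.log (n ^ 4) by rw [Real.log_pow]; norm_num,
      Real.exp_log (by positivity)]
  rw [h4, Real.exp_le_exp, neg_le_neg_iff, le_div_iff₀ hn]
  linarith

/-- For a random 0-1 matrix `A` with independent Bernoulli entries of mean
matrix `Q ∈ [0,1]^{n×n}`, for each `u ≠ v`,
`P[(AAᵀ_{uv} − QQᵀ_{uv})² ≥ 2(n−2)log n + 2n + 4] ≤ 2 n⁻⁴`. -/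
theorem stmt0 (n : ℕ) (Q : Matrix (Fin n) (Fin n) ℝ)
    (hQ : ∀ u v, Q u v ∈ Set.Icc (0 : ℝ) 1)
    {Ω : Type*} [MeasurableSpace Ω] (μ : Measure Ω) [IsProbabilityMeasure μ]
    (A : Ω → Matrix (Fin n) (Fin n) ℝ)
    (hmeas : ∀ u v, Measurable (fun ω => A ω u v))
    (h01 : ∀ ω u v, A ω u v = 0 ∨ A ω u v = 1)
    (hber : ∀ u v, μ {ω | A ω u v = 1} = ENNReal.ofReal (Q u v))
    (hind : iIndepFun
      (fun (p : Fin n × Fin n) ω => A ω p.1 p.2) μ)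
    (u v : Fin n) (huv : u ≠ v) :
    μ {ω | 2 * ((n : ℝ) - 2) * Real.log n + 2 * n + 4 ≤
        ((A ω * (A ω)ᵀ) u v - (Q * Qᵀ) u v) ^ 2}
      ≤ ENNReal.ofReal (2 / (n : ℝ) ^ 4) := by
  set t := 2 * ((n : ℝ) - 2) * Real.log n + 2 * n + 4
  set S := fun ω ↦ (A ω * (A ω)ᵀ) u v - (Q * Qᵀ) u v
  have hn : (0 : ℝ) < n := by exact_mod_cast u.pos
  have ht : 2 * n * Real.log n ≤ t := by linarith [Real.log_le_div_two hn]
  have hlog : 0 ≤ Real.log n := Real.log_nonneg (Nat.one_le_cast.2 u.pos)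
  have ht0 : 0 ≤ t := le_trans (by positivity) ht
  have hS := hasSubgaussianMGF_mul_transpose_sub hmeas h01 hber (fun u v ↦ (hQ u v).1) hind huv
  have hevent : {ω | t ≤ S ω ^ 2} = {ω | √t ≤ |S ω|} := by
    ext ω
    change t ≤ S ω ^ 2 ↔ √t ≤ |S ω|
    rw [← Real.sqrt_sq_eq_abs, Real.sqrt_le_sqrt_iff (sq_nonneg _)]
  rw [hevent, ← ofReal_measureReal]
  apply ENNReal.ofReal_le_ofReal
  calc μ.real {ω | √t ≤ |S ω|}
      ≤ 2 * Real.exp (-√t ^ 2 / (2 * ((Fintype.card (Fin n) / 4 : NNReal) : ℝ))) :=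
        hS.measureReal_abs_ge_le (Real.sqrt_nonneg t)
    _ = 2 * Real.exp (-(2 * t / n)) := by
        rw [Real.sq_sqrt ht0, Fintype.card_fin]
        push_cast
        ring_nf
    _ ≤ 2 * ((n : ℝ) ^ 4)⁻¹ := by gcongr; exact Real.exp_neg_two_mul_div_le_inv_pow_four hn ht
    _ = 2 / n ^ 4 := by ring
end

section
/- Let ν, μ ∈ ℝ^{K×d} be such that νᵀν and μᵀμ have all eigenvalues greater than α > 0. Let τ : [n] → [K] and suppose each block size n_i = |{u : τ(u) = i}| satisfies n_i ≥ γn for some γ > 0. Define X, Y ∈ ℝ^{n×d} by row u: X_u = ν_{τ(u)}, Y_u = μ_{τ(u)}. Then the d-th largest singular value satisfies σ_d(XYᵀ) ≥ αγn. -/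
/-!
Put `c = αγn` and `M = XYᵀ`. Every row `ν_k` occurs at least `γn` times in `X`, so
`XᵀX ≥ γn · νᵀν ≥ c`, and likewise `YᵀY ≥ c`. For `v = Xw` in the `d`-dimensional range of `X`,
`|Mᵀv|² = |Y (XᵀX w)|² ≥ c |XᵀX w|² ≥ c² |Xw|²`, so the quadratic form of `MMᵀ` is at least `c²`
on a `d`-dimensional subspace. By the min-max principle `MMᵀ` then has at least `d` eigenvalues
`≥ c²`, that is `σ_d(M) ≥ c`.
-/

open Matrix

/-- Singular values of a square real matrix, in decreasing order (index `0` is the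
largest): `sval M i = √(λ_{i+1}(M Mᴴ))` where eigenvalues are sorted decreasingly. -/
noncomputable def sval {n : ℕ} (M : Matrix (Fin n) (Fin n) ℝ) : Fin n → ℝ :=
  fun i =>
    Real.sqrt (((Matrix.isHermitian_mul_conjTranspose_self M).eigenvalues ∘
      Tuple.sort (Matrix.isHermitian_mul_conjTranspose_self M).eigenvalues) i.rev)

open Finset

theorem mul_sum_le_sum_comp_of_le_card_fiber {ι κ : Type*} [Fintype ι] [Fintype κ]
    [DecidableEq κ] (τ : ι → κ) {s : ℝ} (hs : ∀ k, s ≤ #{u | τ u = k}) {f : κ → ℝ}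
    (hf : 0 ≤ f) : s * ∑ k, f k ≤ ∑ u, f (τ u) := by
  calc s * ∑ k, f k ≤ ∑ k, (#{u | τ u = k} : ℝ) * f k := by
        rw [mul_sum]
        exact sum_le_sum fun k _ => mul_le_mul_of_nonneg_right (hs k) (hf k)
    _ = ∑ u, f (τ u) := by
        simp only [← nsmul_eq_mul, ← sum_const]
        exact sum_fiberwise' univ τ f

theorem Tuple.le_comp_sort_rev {α : Type*} [LinearOrder α] {n : ℕ} (f : Fin n → α) {t : α}
    (k : Fin n) (hk : (k : ℕ) + 1 ≤ #{i | t ≤ f i}) : t ≤ (f ∘ Tuple.sort f) k.rev := by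
  by_contra! hlt
  have hrev := (Tuple.lt_card_lt_iff_apply_lt_of_monotone (Tuple.monotone_sort f)).mpr hlt
  have hperm : #{i | (f ∘ Tuple.sort f) i < t} = #{i | f i < t} :=
    card_equiv (Tuple.sort f) fun i => by simp
  have hsplit := card_filter_add_card_filter_not (s := univ) (fun i => f i < t)
  simp only [not_lt, card_univ, Fintype.card_fin] at hsplit
  rw [Fin.val_rev] at hrev
  omega

section QuadraticForms

variable {ι κ m : Type*} [Fintype ι] [Fintype κ] [Fintype m]

theorem dotProduct_mulVec_self_eq (A : Matrix ι m ℝ) (w : m → ℝ) :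
    (A *ᵥ w) ⬝ᵥ (A *ᵥ w) = w ⬝ᵥ ((Aᵀ * A) *ᵥ w) := by
  rw [← mulVec_mulVec, dotProduct_mulVec w, vecMul_transpose]

theorem mul_dotProduct_self_le_of_posSemidef_sub [DecidableEq m] {A : Matrix ι m ℝ} {α : ℝ}
    (hA : (Aᵀ * A - α • 1).PosSemidef) (w : m → ℝ) :
    α * (w ⬝ᵥ w) ≤ (A *ᵥ w) ⬝ᵥ (A *ᵥ w) := by
  have := hA.dotProduct_mulVec_nonneg w
  simp only [star_trivial, sub_mulVec, smul_mulVec, one_mulVec, dotProduct_sub,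
    dotProduct_smul, smul_eq_mul] at this
  rw [dotProduct_mulVec_self_eq]
  linarith

theorem mul_mul_dotProduct_self_le_submatrix [DecidableEq κ] [DecidableEq m]
    {ρ : Matrix κ m ℝ} {α : ℝ} (hρ : (ρᵀ * ρ - α • 1).PosSemidef) (τ : ι → κ) {s : ℝ}
    (hs₀ : 0 ≤ s) (hs : ∀ k, s ≤ #{u | τ u = k}) (w : m → ℝ) :
    α * s * (w ⬝ᵥ w) ≤ (ρ.submatrix τ id *ᵥ w) ⬝ᵥ (ρ.submatrix τ id *ᵥ w) :=
  calc α * s * (w ⬝ᵥ w) = s * (α * (w ⬝ᵥ w)) := by ring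
    _ ≤ s * ∑ k, (ρ *ᵥ w) k * (ρ *ᵥ w) k :=
        mul_le_mul_of_nonneg_left (mul_dotProduct_self_le_of_posSemidef_sub hρ w) hs₀
    _ ≤ ∑ u, (ρ *ᵥ w) (τ u) * (ρ *ᵥ w) (τ u) :=
        mul_sum_le_sum_comp_of_le_card_fiber τ hs fun k => mul_self_nonneg _

theorem mulVec_injective_of_forall_mul_dotProduct_self_le {B : Matrix ι m ℝ} {c : ℝ}
    (hc : 0 < c) (hB : ∀ w, c * (w ⬝ᵥ w) ≤ (B *ᵥ w) ⬝ᵥ (B *ᵥ w)) :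
    Function.Injective B.mulVec := by
  refine (injective_iff_map_eq_zero B.mulVecLin).mpr fun w hw => ?_
  have hww := hB w
  rw [mulVecLin_apply] at hw
  rw [hw, dotProduct_zero] at hww
  exact dotProduct_self_eq_zero.mp
    (le_antisymm (nonpos_of_mul_nonpos_right hww hc) (sum_nonneg fun i _ => mul_self_nonneg (w i)))

/-- `BᵀB ≥ c` implies `(BᵀB)² ≥ c BᵀB`: Cauchy–Schwarz for `⟨w, BᵀBw⟩` replaces the square root
of `BᵀB`. -/
theorem mul_dotProduct_self_le_transpose_mulVec {B : Matrix ι m ℝ} {c : ℝ} (hc : 0 ≤ c)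
    (hB : ∀ w, c * (w ⬝ᵥ w) ≤ (B *ᵥ w) ⬝ᵥ (B *ᵥ w)) (w : m → ℝ) :
    c * ((B *ᵥ w) ⬝ᵥ (B *ᵥ w)) ≤ (Bᵀ *ᵥ (B *ᵥ w)) ⬝ᵥ (Bᵀ *ᵥ (B *ᵥ w)) := by
  set z := Bᵀ *ᵥ (B *ᵥ w)
  have hwz : (B *ᵥ w) ⬝ᵥ (B *ᵥ w) = w ⬝ᵥ z := by rw [dotProduct_mulVec_self_eq, ← mulVec_mulVec]
  have hcs : (w ⬝ᵥ z) ^ 2 ≤ (w ⬝ᵥ w) * (z ⬝ᵥ z) := by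
    simpa [dotProduct, pow_two] using sum_mul_sq_le_sq_mul_sq univ w z
  have hw := hB w
  rw [hwz] at hw ⊢
  have hzz : 0 ≤ z ⬝ᵥ z := sum_nonneg fun i _ => mul_self_nonneg (z i)
  rcases le_or_gt (w ⬝ᵥ z) 0 with hneg | hpos
  · nlinarith
  · have key : (w ⬝ᵥ z) * (c * (w ⬝ᵥ z)) ≤ (w ⬝ᵥ z) * (z ⬝ᵥ z) := by
      nlinarith [mul_le_mul_of_nonneg_right hw hzz]
    exact le_of_mul_le_mul_left key hpos

theorem sq_mul_dotProduct_self_le_mul_transpose_mulVec {X Y : Matrix ι m ℝ} {c : ℝ}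
    (hc : 0 ≤ c) (hX : ∀ w, c * (w ⬝ᵥ w) ≤ (X *ᵥ w) ⬝ᵥ (X *ᵥ w))
    (hY : ∀ w, c * (w ⬝ᵥ w) ≤ (Y *ᵥ w) ⬝ᵥ (Y *ᵥ w)) (w : m → ℝ) :
    c ^ 2 * ((X *ᵥ w) ⬝ᵥ (X *ᵥ w)) ≤
      ((X * Yᵀ)ᵀ *ᵥ (X *ᵥ w)) ⬝ᵥ ((X * Yᵀ)ᵀ *ᵥ (X *ᵥ w)) := by
  rw [transpose_mul, transpose_transpose, ← mulVec_mulVec]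
  calc c ^ 2 * ((X *ᵥ w) ⬝ᵥ (X *ᵥ w))
      = c * (c * ((X *ᵥ w) ⬝ᵥ (X *ᵥ w))) := by ring
    _ ≤ c * ((Xᵀ *ᵥ (X *ᵥ w)) ⬝ᵥ (Xᵀ *ᵥ (X *ᵥ w))) :=
        mul_le_mul_of_nonneg_left (mul_dotProduct_self_le_transpose_mulVec hc hX w) hc
    _ ≤ _ := hY _

end QuadraticForms

section Spectrum

variable {ι : Type*} [Fintype ι] [DecidableEq ι] {A : Matrix ι ι ℝ}

theorem dotProduct_mulVec_self_of_mem_unitaryGroup {U : Matrix ι ι ℝ}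
    (hU : U ∈ unitaryGroup ι ℝ) (v : ι → ℝ) : (U *ᵥ v) ⬝ᵥ (U *ᵥ v) = v ⬝ᵥ v := by
  rw [dotProduct_mulVec_self_eq, ← conjTranspose_eq_transpose_of_trivial, ← star_eq_conjTranspose,
    Unitary.star_mul_self_of_mem hU, one_mulVec]

theorem Matrix.IsHermitian.dotProduct_mulVec_eq_sum_eigenvalues (hA : A.IsHermitian)
    (v : ι → ℝ) :
    v ⬝ᵥ (A *ᵥ v) =
      ∑ i, hA.eigenvalues i * (star (hA.eigenvectorUnitary : Matrix ι ι ℝ) *ᵥ v) i ^ 2 := by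
  conv_lhs => rw [hA.spectral_theorem, Unitary.conjStarAlgAut_apply]
  rw [← mulVec_mulVec, ← mulVec_mulVec, dotProduct_mulVec, star_eq_conjTranspose,
    conjTranspose_eq_transpose_of_trivial, ← mulVec_transpose]
  simp only [dotProduct, mulVec_diagonal, Function.comp_apply, RCLike.ofReal_real_eq_id, id_eq]
  exact sum_congr rfl fun i _ => by ring

theorem Matrix.IsHermitian.dotProduct_mulVec_lt_of_eigencoords_eq_zero (hA : A.IsHermitian)
    {t : ℝ} {v : ι → ℝ} (hv : v ≠ 0)
    (hvt : ∀ i, t ≤ hA.eigenvalues i → (star (hA.eigenvectorUnitary : Matrix ι ι ℝ) *ᵥ v) i = 0) :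
    v ⬝ᵥ (A *ᵥ v) < t * (v ⬝ᵥ v) := by
  rw [hA.dotProduct_mulVec_eq_sum_eigenvalues]
  set y := star (hA.eigenvectorUnitary : Matrix ι ι ℝ) *ᵥ v
  have hyy : y ⬝ᵥ y = v ⬝ᵥ v :=
    dotProduct_mulVec_self_of_mem_unitaryGroup (Unitary.star_mem hA.eigenvectorUnitary.2) v
  obtain ⟨i₀, hi₀⟩ : ∃ i, y i ≠ 0 := by
    by_contra! h
    rw [show y = 0 from funext h, zero_dotProduct] at hyy
    exact hv (dotProduct_self_eq_zero.mp hyy.symm)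
  rw [← hyy, dotProduct, mul_sum]
  refine sum_lt_sum (fun i _ => ?_) ⟨i₀, mem_univ _, ?_⟩
  · rcases le_or_gt t (hA.eigenvalues i) with h | h
    · simp [hvt i h]
    · rw [← sq]; exact mul_le_mul_of_nonneg_right h.le (sq_nonneg _)
  · rw [← sq]
    exact mul_lt_mul_of_pos_right (not_le.mp (mt (hvt i₀) hi₀)) (by positivity)

theorem Matrix.IsHermitian.finrank_le_card_le_eigenvalues (hA : A.IsHermitian) {t : ℝ}
    (V : Submodule ℝ (ι → ℝ)) (hV : ∀ v ∈ V, t * (v ⬝ᵥ v) ≤ v ⬝ᵥ (A *ᵥ v)) :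
    Module.finrank ℝ V ≤ #{i | t ≤ hA.eigenvalues i} := by
  by_contra! h
  let coords : V →ₗ[ℝ] ({i // t ≤ hA.eigenvalues i} → ℝ) :=
    LinearMap.funLeft ℝ ℝ Subtype.val ∘ₗ
      (star (hA.eigenvectorUnitary : Matrix ι ι ℝ)).mulVecLin ∘ₗ V.subtype
  have hker : LinearMap.ker coords ≠ ⊥ := by
    apply LinearMap.ker_ne_bot_of_finrank_lt
    rwa [Module.finrank_fintype_fun_eq_card, Fintype.card_subtype]
  obtain ⟨⟨v, hvV⟩, hv, hne⟩ := (Submodule.ne_bot_iff _).mp hker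
  have hvt : ∀ i, t ≤ hA.eigenvalues i →
      (star (hA.eigenvectorUnitary : Matrix ι ι ℝ) *ᵥ v) i = 0 :=
    fun i hi => congrFun (LinearMap.mem_ker.mp hv) ⟨i, hi⟩
  have hv0 : v ≠ 0 := fun h => hne (Subtype.ext h)
  exact (hV v hvV).not_gt (hA.dotProduct_mulVec_lt_of_eigencoords_eq_zero hv0 hvt)

end Spectrum

theorem le_sval_of_le_finrank {n : ℕ} (M : Matrix (Fin n) (Fin n) ℝ) {t : ℝ} (ht : 0 ≤ t)
    (k : Fin n) (V : Submodule ℝ (Fin n → ℝ)) (hV : (k : ℕ) + 1 ≤ Module.finrank ℝ V)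
    (hMV : ∀ v ∈ V, t ^ 2 * (v ⬝ᵥ v) ≤ (Mᵀ *ᵥ v) ⬝ᵥ (Mᵀ *ᵥ v)) : t ≤ sval M k := by
  set hA := isHermitian_mul_conjTranspose_self M
  have hMMt : M * Mᴴ = Mᵀᵀ * Mᵀ := by
    rw [conjTranspose_eq_transpose_of_trivial, transpose_transpose]
  have hcount := hA.finrank_le_card_le_eigenvalues (t := t ^ 2) V fun v hv => by
    rw [hMMt, ← dotProduct_mulVec_self_eq]
    exact hMV v hv
  rw [← Real.sqrt_sq ht]
  exact Real.sqrt_le_sqrt (Tuple.le_comp_sort_rev _ k (hV.trans hcount))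

/-- If all eigenvalues of `νᵀν` and `μᵀμ` exceed `α > 0`, every block of
`τ : [n] → [K]` has size at least `γn`, and `X, Y` have row `u` equal to `ν_{τ(u)}`,
`μ_{τ(u)}` respectively, then `σ_d(XYᵀ) ≥ αγn`. -/
theorem stmt6 {n K d : ℕ} (hd : 0 < d) (hdn : d ≤ n)
    (ν μ : Matrix (Fin K) (Fin d) ℝ) (α γ : ℝ) (hα : 0 < α) (hγ : 0 < γ)
    (hν : (νᵀ * ν - α • (1 : Matrix (Fin d) (Fin d) ℝ)).PosDef)
    (hμ : (μᵀ * μ - α • (1 : Matrix (Fin d) (Fin d) ℝ)).PosDef)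
    (τ : Fin n → Fin K)
    (hblock : ∀ i : Fin K, γ * n ≤ (Finset.univ.filter (fun u => τ u = i)).card)
    (X Y : Matrix (Fin n) (Fin d) ℝ)
    (hX : ∀ u j, X u j = ν (τ u) j) (hY : ∀ u j, Y u j = μ (τ u) j) :
    α * γ * n ≤ sval (X * Yᵀ) ⟨d - 1, by omega⟩ := by
  have hn : (0 : ℝ) < n := by exact_mod_cast hd.trans_le hdn
  have hc : 0 < α * γ * n := by positivity
  have hγn : 0 ≤ γ * n := by positivity
  have hXc : ∀ w, α * γ * n * (w ⬝ᵥ w) ≤ (X *ᵥ w) ⬝ᵥ (X *ᵥ w) := by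
    rw [show X = ν.submatrix τ id from Matrix.ext hX, mul_assoc α]
    exact mul_mul_dotProduct_self_le_submatrix hν.posSemidef τ hγn hblock
  have hYc : ∀ w, α * γ * n * (w ⬝ᵥ w) ≤ (Y *ᵥ w) ⬝ᵥ (Y *ᵥ w) := by
    rw [show Y = μ.submatrix τ id from Matrix.ext hY, mul_assoc α]
    exact mul_mul_dotProduct_self_le_submatrix hμ.posSemidef τ hγn hblock
  have hrank : Module.finrank ℝ (LinearMap.range X.mulVecLin) = d := by
    rw [LinearMap.finrank_range_of_inj (mulVec_injective_of_forall_mul_dotProduct_self_le hc hXc),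
      Module.finrank_fin_fun]
  refine le_sval_of_le_finrank _ hc.le _ _ (by rw [hrank, Fin.val_mk]; omega) ?_
  rintro _ ⟨w, rfl⟩
  exact sq_mul_dotProduct_self_le_mul_transpose_mulVec hc.le hXc hYc w
end

section
/- Let X, Y ∈ ℝ^{n×d} and let XYᵀ = UΣVᵀ be a rank-d singular value decomposition with U, V ∈ ℝ^{n×d} having orthonormal columns and Σ diagonal with σ₁ ≥ … ≥ σ_d > 0. Suppose λ_d(YᵀY) ≥ αγn, σ₁ ≤ n, and ‖X_u − X_v‖ ≥ β for some pair u, v. Then ‖U_u − U_v‖ ≥ β√(αγ)·n^{−1/2}. -/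
/-!
Subtracting rows `v` from `u` in `X Yᵀ = U Σ Vᵀ` gives `Y a = V (Σ b)` with `a = X_u - X_v` and
`b = U_u - U_v`. The eigenvalue bound on `YᵀY` gives `αγn ‖a‖² ≤ ‖Y a‖²`, the isometry `V`
preserves `‖Σ b‖`, and `σ₁ ≤ n` gives `‖Σ b‖ ≤ n ‖b‖`; taking square roots,
`√(αγn) β ≤ n ‖b‖`.
-/

open Matrix

namespace Matrix

variable {m k p r : Type*} [Fintype k]

theorem mul_apply_sub_mul_apply {R : Type*} [Ring R] (A : Matrix m k R) (B : Matrix k r R) (u v : m) :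
    (A * B) u - (A * B) v = (A u - A v) ᵥ* B := by
  rw [mul_apply_eq_vecMul, mul_apply_eq_vecMul, sub_vecMul]

section

variable [Fintype m]

theorem dotProduct_transpose_mul_self_mulVec (M : Matrix m k ℝ) (z : k → ℝ) :
    z ⬝ᵥ (Mᵀ * M) *ᵥ z = (M *ᵥ z) ⬝ᵥ (M *ᵥ z) := by
  rw [← mulVec_mulVec, dotProduct_mulVec, vecMul_transpose]

theorem dotProduct_mulVec_self_of_transpose_mul_self_eq_one [DecidableEq k] {V : Matrix m k ℝ}
    (hV : Vᵀ * V = 1) (z : k → ℝ) : (V *ᵥ z) ⬝ᵥ (V *ᵥ z) = z ⬝ᵥ z := by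
  rw [← dotProduct_transpose_mul_self_mulVec, hV, one_mulVec]

theorem le_dotProduct_mulVec_self_of_posSemidef [DecidableEq k] {M : Matrix m k ℝ} {c : ℝ}
    (hM : (Mᵀ * M - c • (1 : Matrix k k ℝ)).PosSemidef) (z : k → ℝ) :
    c * (z ⬝ᵥ z) ≤ (M *ᵥ z) ⬝ᵥ (M *ᵥ z) := by
  have h := hM.dotProduct_mulVec_nonneg z
  simp only [star_trivial, sub_mulVec, smul_mulVec, one_mulVec, dotProduct_sub,
    dotProduct_smul, smul_eq_mul] at h
  rw [dotProduct_transpose_mul_self_mulVec] at h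
  linarith

end

theorem dotProduct_vecMul_diagonal_self_le [Fintype r] [DecidableEq r] {s : r → ℝ} {K : ℝ}
    (hs : ∀ i, |s i| ≤ K) (z : r → ℝ) :
    (z ᵥ* diagonal s) ⬝ᵥ (z ᵥ* diagonal s) ≤ K ^ 2 * (z ⬝ᵥ z) := by
  simp only [dotProduct, vecMul_diagonal, Finset.mul_sum]
  refine Finset.sum_le_sum fun i _ => ?_
  have hsK : s i ^ 2 ≤ K ^ 2 := sq_le_sq' (abs_le.mp (hs i)).1 (abs_le.mp (hs i)).2
  nlinarith [mul_self_nonneg (z i)]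

theorem mul_dotProduct_sub_rows_le_of_eq_mul_diagonal_mul [Fintype p] [Fintype r]
    [DecidableEq k] [DecidableEq r]
    {X : Matrix m k ℝ} {Y : Matrix p k ℝ} {U : Matrix m r ℝ} {V : Matrix p r ℝ}
    {s : r → ℝ} {c K : ℝ}
    (hSVD : X * Yᵀ = U * diagonal s * Vᵀ) (hV : Vᵀ * V = 1)
    (hY : (Yᵀ * Y - c • (1 : Matrix k k ℝ)).PosSemidef) (hs : ∀ i, |s i| ≤ K) (u v : m) :
    c * ((X u - X v) ⬝ᵥ (X u - X v)) ≤ K ^ 2 * ((U u - U v) ⬝ᵥ (U u - U v)) := by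
  set b := U u - U v
  have hYa : Y *ᵥ (X u - X v) = V *ᵥ (b ᵥ* diagonal s) := by
    have h := congrArg (fun M => M u - M v) hSVD
    simp only [mul_apply_sub_mul_apply, vecMul_transpose] at h
    exact h
  calc c * ((X u - X v) ⬝ᵥ (X u - X v))
      ≤ (Y *ᵥ (X u - X v)) ⬝ᵥ (Y *ᵥ (X u - X v)) := le_dotProduct_mulVec_self_of_posSemidef hY _
    _ = (b ᵥ* diagonal s) ⬝ᵥ (b ᵥ* diagonal s) := by
      rw [hYa, dotProduct_mulVec_self_of_transpose_mul_self_eq_one hV]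
    _ ≤ K ^ 2 * (b ⬝ᵥ b) := dotProduct_vecMul_diagonal_self_le hs b

end Matrix

theorem Real.mul_sqrt_div_le_sqrt_of_mul_le {A B c K β : ℝ} (hA : 0 ≤ A) (hK : 0 ≤ K)
    (hβ : β ≤ √A) (h : c * A ≤ K ^ 2 * B) : β * √c / K ≤ √B := by
  have hroot : √c * √A ≤ K * √B := by
    rw [← Real.sqrt_mul' c hA, ← Real.sqrt_sq hK, ← Real.sqrt_mul (sq_nonneg K)]
    exact Real.sqrt_le_sqrt h
  refine div_le_of_le_mul₀ hK (Real.sqrt_nonneg B) ?_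
  calc β * √c ≤ √A * √c := mul_le_mul_of_nonneg_right hβ (Real.sqrt_nonneg c)
    _ ≤ √B * K := by linarith

theorem stmt16_general {n d : ℕ}
    (X Y U V : Matrix (Fin n) (Fin d) ℝ) (s : Fin d → ℝ)
    (hspos : ∀ i, 0 < s i) (hsle : ∀ i, s i ≤ n)
    (hSVD : X * Yᵀ = U * Matrix.diagonal s * Vᵀ)
    (hV : Vᵀ * V = 1)
    (α γ β : ℝ)
    (hYY : (Yᵀ * Y - (α * γ * n) • (1 : Matrix (Fin d) (Fin d) ℝ)).PosSemidef)
    (u v : Fin n)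
    (hXuv : β ≤ Real.sqrt (∑ j, (X u j - X v j) ^ 2)) :
    β * Real.sqrt (α * γ) / Real.sqrt n ≤ Real.sqrt (∑ j, (U u j - U v j) ^ 2) := by
  have hs : ∀ i, |s i| ≤ n := fun i => (abs_of_pos (hspos i)).le.trans (hsle i)
  have key := mul_dotProduct_sub_rows_le_of_eq_mul_diagonal_mul hSVD hV hYY hs u v
  simp only [dotProduct, Pi.sub_apply, ← sq] at key
  have hroot := Real.mul_sqrt_div_le_sqrt_of_mul_le (by positivity) (Nat.cast_nonneg n) hXuv key
  calc β * √(α * γ) / √n = β * √(α * γ * n) / n := by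
        rw [Real.sqrt_mul' _ (Nat.cast_nonneg n), mul_div_assoc, mul_div_assoc, mul_div_assoc,
          Real.sqrt_div_self', one_div, div_eq_mul_inv]
    _ ≤ _ := hroot

/-- Let `XYᵀ = UΣVᵀ` be a rank-`d` SVD with `U, V` having orthonormal
columns and `Σ = diagonal s` with `s 0 ≥ … ≥ s (d-1) > 0`.  If all eigenvalues of `YᵀY`
are at least `αγn`, all singular values are at most `n`, and rows `u, v` of `X` satisfy
`‖X_u − X_v‖ ≥ β`, then `‖U_u − U_v‖ ≥ β√(αγ)·n^{-1/2}`. -/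
theorem stmt16 {n d : ℕ} (hn : 0 < n)
    (X Y U V : Matrix (Fin n) (Fin d) ℝ) (s : Fin d → ℝ)
    (hs : Antitone s) (hspos : ∀ i, 0 < s i) (hsle : ∀ i, s i ≤ n)
    (hSVD : X * Yᵀ = U * Matrix.diagonal s * Vᵀ)
    (hU : Uᵀ * U = 1) (hV : Vᵀ * V = 1)
    (α γ β : ℝ) (hα : 0 < α) (hγ : 0 < γ) (hβ : 0 < β)
    (hYY : (Yᵀ * Y - (α * γ * n) • (1 : Matrix (Fin d) (Fin d) ℝ)).PosSemidef)
    (u v : Fin n)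
    (hXuv : β ≤ Real.sqrt (∑ j, (X u j - X v j) ^ 2)) :
    β * Real.sqrt (α * γ) / Real.sqrt n ≤ Real.sqrt (∑ j, (U u j - U v j) ^ 2) :=
  stmt16_general X Y U V s hspos hsle hSVD hV α γ β hYY u v hXuv
end

section
/- Let W ∈ ℝ^{n×m} have at most K distinct rows, and suppose the rows come in groups: τ : [n] → [K] with W_u = W_v whenever τ(u) = τ(v), and ‖W_u − W_v‖ ≥ 3r whenever τ(u) ≠ τ(v), with every block size |τ^{−1}(i)| > N. Let C ∈ ℝ^{n×m} also have at most K distinct rows, constant on blocks of a partition of [n] into K parts, and suppose ‖C − W‖_F ≤ r√N. Then the number of indices u with ‖C_u − W_u‖ > r is at most N; moreover the balls of radius r around the K distinct rows of W are pairwise disjoint, and each such ball contains exactly one distinct row of C. -/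
/-!
The Frobenius bound says that the squared row errors `‖C_u − W_u‖²` sum to at most `r² N`,
so more than `N` rows with error `> r` would already exceed it. Since every block of `τ` has
more than `N` rows, each block contains a row `u` with `C_u` within `r` of `W_u`, so each of
the `K` pairwise disjoint balls around the rows of `W` contains a row value of `C`. As `C`
has only `K` row values, the map sending a ball to such a value is a bijection, and each ball
contains exactly one of them.
-/

open Finset Function Metric

theorem Finset.card_filter_lt_le_of_sum_sq_le {ι : Type*} [Fintype ι] {d : ι → ℝ} {r : ℝ}
    {N : ℕ} (hr : 0 ≤ r) (hsum : ∑ i, d i ^ 2 ≤ r ^ 2 * N) : #{i | r < d i} ≤ N := by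
  by_contra! hN
  set T := univ.filter (fun i => r < d i)
  have hT : T.Nonempty := card_pos.mp (by omega)
  have hNT : (N : ℝ) ≤ #T := by exact_mod_cast hN.le
  refine lt_irrefl (r ^ 2 * (N : ℝ)) ?_
  calc r ^ 2 * N ≤ r ^ 2 * #T := by gcongr
    _ = ∑ _ ∈ T, r ^ 2 := by rw [sum_const, nsmul_eq_mul, mul_comm]
    _ < ∑ i ∈ T, d i ^ 2 :=
        sum_lt_sum_of_nonempty hT fun i hi => pow_lt_pow_left₀ (mem_filter.mp hi).2 hr two_ne_zero
    _ ≤ ∑ i, d i ^ 2 := sum_le_sum_of_subset_of_nonneg (subset_univ T) fun i _ _ => sq_nonneg _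
    _ ≤ r ^ 2 * N := hsum

theorem existsUnique_mem_range_of_pairwise_disjoint {κ X : Type*} [Finite κ] {B : κ → Set X}
    (hB : Pairwise (Disjoint on B)) {ψ : κ → X} (hψ : ∀ i, ∃ j, ψ j ∈ B i) (i : κ) :
    ∃! p, p ∈ Set.range ψ ∧ p ∈ B i := by
  choose g hg using hψ
  have hg_inj : Injective g := fun i i' h =>
    hB.eq (Set.not_disjoint_iff.mpr ⟨ψ (g i), hg i, h ▸ hg i'⟩)
  refine ⟨ψ (g i), ⟨⟨g i, rfl⟩, hg i⟩, ?_⟩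
  rintro _ ⟨⟨j, rfl⟩, hj⟩
  obtain ⟨i', rfl⟩ := Finite.surjective_of_injective hg_inj j
  rw [hB.eq (Set.not_disjoint_iff.mpr ⟨ψ (g i'), hg i', hj⟩)]

/-- `W` has at most `K` distinct rows (constant on blocks of `τ`, with rows
in different blocks at distance `≥ 3r`, and all block sizes `> N`), `C` is constant on
blocks of some partition `σ` into `K` parts with values `ψ`, and `‖C − W‖_F ≤ r√N`.
Then at most `N` rows satisfy `‖C_u − W_u‖ > r`; moreover the radius-`r` balls around the
distinct rows of `W` are pairwise disjoint, and each contains exactly one distinct row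
of `C`. -/
theorem stmt17 {n m K N : ℕ} (r : ℝ) (hr : 0 < r)
    (W C : Fin n → EuclideanSpace ℝ (Fin m)) (τ σ : Fin n → Fin K)
    (ψ : Fin K → EuclideanSpace ℝ (Fin m))
    (hWconst : ∀ u v, τ u = τ v → W u = W v)
    (hWsep : ∀ u v, τ u ≠ τ v → 3 * r ≤ dist (W u) (W v))
    (hblock : ∀ i : Fin K, N < (Finset.univ.filter (fun u => τ u = i)).card)
    (hC : ∀ u, C u = ψ (σ u))
    (hF : Real.sqrt (∑ u, dist (C u) (W u) ^ 2) ≤ r * Real.sqrt N) :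
    {u : Fin n | r < dist (C u) (W u)}.ncard ≤ N ∧
    (∀ u v, τ u ≠ τ v →
      Disjoint (Metric.closedBall (W u) r) (Metric.closedBall (W v) r)) ∧
    (∀ u : Fin n, ∃! p : EuclideanSpace ℝ (Fin m),
      p ∈ Set.range ψ ∧ p ∈ Metric.closedBall (W u) r) := by
  have hsum : ∑ u, dist (C u) (W u) ^ 2 ≤ r ^ 2 * N := by
    rwa [← Real.sqrt_le_sqrt_iff (by positivity), Real.sqrt_mul (sq_nonneg r),
      Real.sqrt_sq hr.le]
  have hbad := card_filter_lt_le_of_sum_sq_le hr.le hsum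
  have hdisj : ∀ u v, τ u ≠ τ v → Disjoint (closedBall (W u) r) (closedBall (W v) r) :=
    fun u v huv => closedBall_disjoint_closedBall (by linarith [hWsep u v huv])
  have hgood : ∀ i, ∃ v, τ v = i ∧ dist (C v) (W v) ≤ r := fun i => by
    obtain ⟨v, hv, hv_good⟩ := exists_mem_notMem_of_card_lt_card (hbad.trans_lt (hblock i))
    simp only [mem_filter, mem_univ, true_and, not_lt] at hv hv_good
    exact ⟨v, hv, hv_good⟩
  choose v hvτ hv_good using hgood
  have hunique := existsUnique_mem_range_of_pairwise_disjoint (ψ := ψ)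
    (B := fun i => closedBall (W (v i)) r)
    (fun i j hij => hdisj (v i) (v j) (by rwa [hvτ, hvτ]))
    (fun i => ⟨σ (v i), hC (v i) ▸ mem_closedBall.mpr (hv_good i)⟩)
  refine ⟨?_, hdisj, fun u => ?_⟩
  · rwa [Set.ncard_eq_toFinset_card', Set.toFinset_ofPred]
  · simpa only [hWconst (v (τ u)) u (hvτ _)] using hunique (τ u)
end
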